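/- arXiv:1602.04398 — 2 statements merged into one kernel-verified Lean document; each statement's English description precedes it below -/
import Mathlib

section
/- Let U ∈ R^{n1×r} and V ∈ R^{n2×r} have orthonormal columns, let Ũ ∈ R^{n1×(n1−r)} have orthonormal columns spanning the orthogonal complement of the column space of U, let Q ∈ R^{r×r} have smallest singular value σ_r > 0, and set X = U Q V^T. Let Û ∈ R^{n1×r} and V̂ ∈ R^{n2×r} have orthonormal columns and Σ̂ ∈ R^{r×r} be arbitrary. Then ‖Ũ^T Û‖_F ≤ (1/σ_r)·‖X − Û Σ̂ V̂^T‖_F; likewise, with Ṽ the orthonormal complement of V, ‖Ṽ^T V̂‖_F ≤ (1/σ_r)·‖X − Û Σ̂ V̂^T‖_F. -/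
open Matrix

/-- The Frobenius norm of a real matrix. -/
noncomputable def frobNorm {n1 n2 : ℕ} (M : Matrix (Fin n1) (Fin n2) ℝ) : ℝ :=
  Real.sqrt (∑ i, ∑ j, (M i j) ^ 2)

/-- The Euclidean (ℓ²) norm of a vector in `ℝ^n`. -/
noncomputable def l2norm {n : ℕ} (v : Fin n → ℝ) : ℝ :=
  Real.sqrt (∑ i, (v i) ^ 2)

/-! Let `P = 1 - V̂ V̂ᵀ`, which kills the rows of `Û Σ̂ V̂ᵀ`. Then `(X - Û Σ̂ V̂ᵀ) P = U Q Vᵀ P`, so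
`‖X - Û Σ̂ V̂ᵀ‖_F ≥ ‖U Q Vᵀ P‖_F = ‖Q Vᵀ P‖_F ≥ σ_r ‖Vᵀ P‖_F`, and
`‖Vᵀ P‖_F² = r - ‖Vᵀ V̂‖_F² ≥ ‖Ṽᵀ V̂‖_F²` because the columns of `V` and `Ṽ` are orthonormal
together. The bound for `Ũ` is the same argument applied to the transpose, as the square matrix `Qᵀ`
satisfies the same lower bound as `Q`. -/

namespace LinearMap

variable {𝕜 E F : Type*} [RCLike 𝕜]

theorem mul_norm_le_norm_apply_of_forall_norm_eq_one [NormedAddCommGroup E] [NormedSpace 𝕜 E]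
    [NormedAddCommGroup F] [NormedSpace 𝕜 F] {T : E →ₗ[𝕜] F} {σ : ℝ}
    (h : ∀ v, ‖v‖ = 1 → σ ≤ ‖T v‖) (x : E) : σ * ‖x‖ ≤ ‖T x‖ := by
  rcases eq_or_ne x 0 with rfl | hx
  · simp
  have hx' : 0 < ‖x‖ := norm_pos_iff.2 hx
  have hunit := h _ (norm_smul_inv_norm (𝕜 := 𝕜) hx)
  rwa [map_smul, norm_smul, norm_inv, RCLike.norm_ofReal, abs_norm, inv_mul_eq_div,
    le_div_iff₀ hx'] at hunit

theorem mul_norm_le_norm_adjoint_apply [NormedAddCommGroup E] [InnerProductSpace 𝕜 E]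
    [NormedAddCommGroup F] [InnerProductSpace 𝕜 F] [FiniteDimensional 𝕜 E]
    [FiniteDimensional 𝕜 F] {T : E →ₗ[𝕜] F} (hT : Function.Surjective T) {σ : ℝ}
    (h : ∀ x, σ * ‖x‖ ≤ ‖T x‖) (y : F) : σ * ‖y‖ ≤ ‖adjoint T y‖ := by
  obtain ⟨x, rfl⟩ := hT y
  have hCS : ‖T x‖ ^ 2 ≤ ‖adjoint T (T x)‖ * ‖x‖ := by
    rw [← inner_self_eq_norm_sq (𝕜 := 𝕜), ← adjoint_inner_left]
    exact (RCLike.re_le_norm _).trans (norm_inner_le_norm _ _)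
  rcases le_or_gt σ 0 with hσ | hσ
  · exact (mul_nonpos_of_nonpos_of_nonneg hσ (norm_nonneg _)).trans (norm_nonneg _)
  rcases (norm_nonneg (T x)).eq_or_lt with h0 | hpos
  · simp [← h0]
  refine le_of_mul_le_mul_right ?_ hpos
  calc σ * ‖T x‖ * ‖T x‖ = σ * ‖T x‖ ^ 2 := by ring
    _ ≤ σ * (‖adjoint T (T x)‖ * ‖x‖) := by gcongr
    _ = ‖adjoint T (T x)‖ * (σ * ‖x‖) := by ring
    _ ≤ ‖adjoint T (T x)‖ * ‖T x‖ := by gcongr; exact h x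

end LinearMap

namespace Matrix

theorem mul_norm_le_norm_toEuclideanLin_transpose_apply {n : Type*} [Fintype n] [DecidableEq n]
    {Q : Matrix n n ℝ} {σ : ℝ} (hσ : 0 < σ) (hQ : ∀ x, σ * ‖x‖ ≤ ‖toEuclideanLin Q x‖)
    (y : EuclideanSpace ℝ n) : σ * ‖y‖ ≤ ‖toEuclideanLin Qᵀ y‖ := by
  have hinj : Function.Injective (toEuclideanLin Q) := by
    rw [← LinearMap.ker_eq_bot, LinearMap.ker_eq_bot']
    intro x hx
    have hle := hQ x
    rw [hx, norm_zero] at hle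
    exact norm_le_zero_iff.1 (nonpos_of_mul_nonpos_right hle hσ)
  rw [← conjTranspose_eq_transpose_of_trivial, toEuclideanLin_conjTranspose_eq_adjoint]
  exact LinearMap.mul_norm_le_norm_adjoint_apply (LinearMap.injective_iff_surjective.1 hinj) hQ y

variable {l m n k : Type*} [Fintype l] [Fintype m] [Fintype n] [Fintype k]

def frobSq (M : Matrix m n ℝ) : ℝ := ∑ i, ∑ j, M i j ^ 2

theorem frobSq_eq_trace (M : Matrix m n ℝ) : frobSq M = trace (M * Mᵀ) := by
  simp [frobSq, trace, mul_apply, sq]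

theorem frobSq_nonneg (M : Matrix m n ℝ) : 0 ≤ frobSq M := by
  unfold frobSq; positivity

theorem frobSq_transpose (M : Matrix m n ℝ) : frobSq Mᵀ = frobSq M := by
  rw [frobSq_eq_trace, frobSq_eq_trace, transpose_transpose, trace_mul_comm]

theorem frobSq_fromRows {m' : Type*} [Fintype m'] (A : Matrix m n ℝ) (B : Matrix m' n ℝ) :
    frobSq (fromRows A B) = frobSq A + frobSq B := by
  simp [frobSq, Fintype.sum_sum_type]

theorem frobSq_eq_sum_norm_sq_col (M : Matrix m n ℝ) :
    frobSq M = ∑ j, ‖WithLp.toLp 2 (fun i => M i j)‖ ^ 2 := by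
  simp only [EuclideanSpace.real_norm_sq_eq]
  exact Finset.sum_comm

theorem frobSq_mul (A : Matrix m n ℝ) (X : Matrix n k ℝ) :
    frobSq (A * X) = trace (A * (X * Xᵀ) * Aᵀ) := by
  rw [frobSq_eq_trace, transpose_mul]
  simp only [Matrix.mul_assoc]

theorem frobSq_eq_card_of_isometry [DecidableEq k] {W : Matrix n k ℝ} (hW : Wᵀ * W = 1) :
    frobSq W = Fintype.card k := by
  rw [← frobSq_transpose, frobSq_eq_trace, transpose_transpose, hW, trace_one]

theorem frobSq_isometry_mul [DecidableEq m] {W : Matrix k m ℝ} (hW : Wᵀ * W = 1)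
    (A : Matrix m n ℝ) : frobSq (W * A) = frobSq A := by
  rw [frobSq_eq_trace, frobSq_eq_trace, transpose_mul, Matrix.mul_assoc, trace_mul_comm]
  simp only [Matrix.mul_assoc, hW, Matrix.mul_one]

theorem frobSq_eq_add_of_isometry [DecidableEq n] [DecidableEq k] {W : Matrix n k ℝ}
    (hW : Wᵀ * W = 1) (A : Matrix m n ℝ) :
    frobSq A = frobSq (A * (1 - W * Wᵀ)) + frobSq (A * W) := by
  have hWW : W * Wᵀ * (W * Wᵀ) = W * Wᵀ := by
    rw [Matrix.mul_assoc, ← Matrix.mul_assoc Wᵀ, hW, Matrix.one_mul]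
  have hP : (1 - W * Wᵀ) * (1 - W * Wᵀ)ᵀ = 1 - W * Wᵀ := by
    simp [Matrix.sub_mul, Matrix.mul_sub, hWW]
  rw [frobSq_mul, frobSq_mul, hP, ← trace_add, ← Matrix.add_mul, ← Matrix.mul_add,
    sub_add_cancel, Matrix.mul_one, frobSq_eq_trace]

theorem frobSq_mul_isometry_le [DecidableEq n] [DecidableEq k] {W : Matrix n k ℝ}
    (hW : Wᵀ * W = 1) (A : Matrix m n ℝ) : frobSq (A * W) ≤ frobSq A := by
  linarith [frobSq_eq_add_of_isometry hW A, frobSq_nonneg (A * (1 - W * Wᵀ))]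

theorem frobSq_mul_one_sub_le [DecidableEq n] [DecidableEq k] {W : Matrix n k ℝ}
    (hW : Wᵀ * W = 1) (A : Matrix m n ℝ) : frobSq (A * (1 - W * Wᵀ)) ≤ frobSq A := by
  linarith [frobSq_eq_add_of_isometry hW A, frobSq_nonneg (A * W)]

theorem sq_mul_frobSq_le_frobSq_mul [DecidableEq m] {Q : Matrix l m ℝ} {σ : ℝ} (hσ : 0 ≤ σ)
    (hQ : ∀ x, σ * ‖x‖ ≤ ‖toEuclideanLin Q x‖) (M : Matrix m n ℝ) :
    σ ^ 2 * frobSq M ≤ frobSq (Q * M) := by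
  rw [frobSq_eq_sum_norm_sq_col, frobSq_eq_sum_norm_sq_col, Finset.mul_sum]
  refine Finset.sum_le_sum fun j _ => ?_
  have hcol : WithLp.toLp 2 (fun i => (Q * M) i j) =
      toEuclideanLin Q (WithLp.toLp 2 (fun i => M i j)) := by
    ext i; simp [mul_apply, mulVec, dotProduct]
  rw [hcol, ← mul_pow]
  exact pow_le_pow_left₀ (by positivity) (hQ _) 2

theorem frobSq_transpose_mul_le {r s : Type*} [Fintype r] [Fintype s] [DecidableEq n]
    [DecidableEq r] [DecidableEq s] {B : Matrix n r ℝ} {Bt : Matrix n s ℝ} (hB : Bᵀ * B = 1)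
    (hBt : Btᵀ * Bt = 1) (hperp : Bᵀ * Bt = 0) {Bh : Matrix n r ℝ} (hBh : Bhᵀ * Bh = 1) :
    frobSq (Btᵀ * Bh) ≤ frobSq (Bᵀ * (1 - Bh * Bhᵀ)) := by
  have hperp' : Btᵀ * B = 0 := by simpa using congrArg transpose hperp
  have hW : (fromCols B Bt)ᵀ * fromCols B Bt = 1 := by
    rw [transpose_fromCols, fromRows_mul_fromCols, hB, hBt, hperp, hperp', fromBlocks_one]
  have hcols : frobSq (Bᵀ * Bh) + frobSq (Btᵀ * Bh) ≤ Fintype.card r :=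
    calc frobSq (Bᵀ * Bh) + frobSq (Btᵀ * Bh)
        = frobSq (Bhᵀ * fromCols B Bt) := by
          rw [← frobSq_fromRows, ← fromRows_mul, ← transpose_fromCols, ← frobSq_transpose,
            transpose_mul, transpose_transpose]
      _ ≤ frobSq Bhᵀ := frobSq_mul_isometry_le hW _
      _ = Fintype.card r := by rw [frobSq_transpose, frobSq_eq_card_of_isometry hBh]
  have hproj := frobSq_eq_add_of_isometry hBh Bᵀ
  rw [frobSq_transpose, frobSq_eq_card_of_isometry hB] at hproj
  linarith

theorem sq_mul_frobSq_transpose_mul_le {r s : Type*} [Fintype r] [Fintype s] [DecidableEq l]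
    [DecidableEq n] [DecidableEq r] [DecidableEq s] {A : Matrix m l ℝ} (hA : Aᵀ * A = 1)
    {B : Matrix n r ℝ} (hB : Bᵀ * B = 1) {Bt : Matrix n s ℝ} (hBt : Btᵀ * Bt = 1)
    (hperp : Bᵀ * Bt = 0) {Q : Matrix l r ℝ} {σ : ℝ} (hσ : 0 ≤ σ)
    (hQ : ∀ x, σ * ‖x‖ ≤ ‖toEuclideanLin Q x‖) {Bh : Matrix n r ℝ} (hBh : Bhᵀ * Bh = 1)
    (D : Matrix m r ℝ) :
    σ ^ 2 * frobSq (Btᵀ * Bh) ≤ frobSq (A * Q * Bᵀ - D * Bhᵀ) := by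
  have hkill : (A * Q * Bᵀ - D * Bhᵀ) * (1 - Bh * Bhᵀ) = A * (Q * (Bᵀ * (1 - Bh * Bhᵀ))) := by
    simp only [Matrix.sub_mul, Matrix.mul_sub, Matrix.mul_one, Matrix.mul_assoc]
    rw [← Matrix.mul_assoc Bhᵀ Bh, hBh, Matrix.one_mul]
    abel
  calc σ ^ 2 * frobSq (Btᵀ * Bh)
      ≤ σ ^ 2 * frobSq (Bᵀ * (1 - Bh * Bhᵀ)) := by
        gcongr; exact frobSq_transpose_mul_le hB hBt hperp hBh
    _ ≤ frobSq (Q * (Bᵀ * (1 - Bh * Bhᵀ))) := sq_mul_frobSq_le_frobSq_mul hσ hQ _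
    _ = frobSq ((A * Q * Bᵀ - D * Bhᵀ) * (1 - Bh * Bhᵀ)) := by
        rw [hkill, frobSq_isometry_mul hA]
    _ ≤ frobSq (A * Q * Bᵀ - D * Bhᵀ) := frobSq_mul_one_sub_le hBh _

end Matrix

theorem l2norm_eq_norm {n : ℕ} (v : Fin n → ℝ) : l2norm v = ‖WithLp.toLp 2 v‖ := by
  simp [l2norm, EuclideanSpace.norm_eq]

theorem frobNorm_le_of_sq_mul_frobSq_le {a b c d : ℕ} {M : Matrix (Fin a) (Fin b) ℝ}
    {E : Matrix (Fin c) (Fin d) ℝ} {σ : ℝ} (hσ : 0 < σ) (h : σ ^ 2 * frobSq M ≤ frobSq E) :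
    frobNorm M ≤ (1 / σ) * frobNorm E := by
  change √(frobSq M) ≤ 1 / σ * √(frobSq E)
  calc √(frobSq M) = √(σ ^ 2 * frobSq M) / σ := by
        rw [Real.sqrt_mul (sq_nonneg σ), Real.sqrt_sq hσ.le]; field_simp
    _ ≤ √(frobSq E) / σ := by gcongr
    _ = 1 / σ * √(frobSq E) := by ring

theorem stmt5_general {n1 n2 r : ℕ}
    (U : Matrix (Fin n1) (Fin r) ℝ) (hU : Uᵀ * U = 1)
    (V : Matrix (Fin n2) (Fin r) ℝ) (hV : Vᵀ * V = 1)
    (Ut : Matrix (Fin n1) (Fin (n1 - r)) ℝ) (hUt : Utᵀ * Ut = 1) (hUperp : Uᵀ * Ut = 0)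
    (Vt : Matrix (Fin n2) (Fin (n2 - r)) ℝ) (hVt : Vtᵀ * Vt = 1) (hVperp : Vᵀ * Vt = 0)
    (Q : Matrix (Fin r) (Fin r) ℝ) (σr : ℝ) (hσr : 0 < σr)
    (hσr_min : IsLeast {t | ∃ v : Fin r → ℝ, l2norm v = 1 ∧ t = l2norm (Q *ᵥ v)} σr)
    (Uh : Matrix (Fin n1) (Fin r) ℝ) (hUh : Uhᵀ * Uh = 1)
    (Vh : Matrix (Fin n2) (Fin r) ℝ) (hVh : Vhᵀ * Vh = 1)
    (Sh : Matrix (Fin r) (Fin r) ℝ) :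
    frobNorm (Utᵀ * Uh) ≤ (1 / σr) * frobNorm (U * Q * Vᵀ - Uh * Sh * Vhᵀ) ∧
    frobNorm (Vtᵀ * Vh) ≤ (1 / σr) * frobNorm (U * Q * Vᵀ - Uh * Sh * Vhᵀ) := by
  have hQ : ∀ x, σr * ‖x‖ ≤ ‖toEuclideanLin Q x‖ :=
    LinearMap.mul_norm_le_norm_apply_of_forall_norm_eq_one (𝕜 := ℝ) fun x hx =>
      hσr_min.2 ⟨WithLp.ofLp x, by rwa [l2norm_eq_norm], by rw [l2norm_eq_norm]; rfl⟩
  have hQt := mul_norm_le_norm_toEuclideanLin_transpose_apply hσr hQ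
  have hEt : (U * Q * Vᵀ - Uh * Sh * Vhᵀ)ᵀ = V * Qᵀ * Uᵀ - Vh * Shᵀ * Uhᵀ := by
    simp only [transpose_sub, transpose_mul, transpose_transpose, Matrix.mul_assoc]
  refine ⟨frobNorm_le_of_sq_mul_frobSq_le hσr ?_, frobNorm_le_of_sq_mul_frobSq_le hσr ?_⟩
  · rw [← frobSq_transpose (U * Q * Vᵀ - _), hEt]
    exact sq_mul_frobSq_transpose_mul_le hV hU hUt hUperp hσr.le hQt hUh (Vh * Shᵀ)
  · exact sq_mul_frobSq_transpose_mul_le hU hV hVt hVperp hσr.le hQ hVh (Uh * Sh)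

/-- Lemma 4 of the paper (subspace perturbation bound): if `X = U Q Vᵀ` where `U, V` have
orthonormal columns and the smallest singular value of `Q` is `σr > 0` (characterized as the
least value of `‖Q v‖₂` over unit vectors `v`), and if `Ũ` (resp. `Ṽ`) has orthonormal columns
spanning the orthogonal complement of the column space of `U` (resp. `V`), then for any
`Û, V̂` with orthonormal columns and any `Σ̂`,
`‖Ũᵀ Û‖_F ≤ (1/σr)·‖X − Û Σ̂ V̂ᵀ‖_F` and `‖Ṽᵀ V̂‖_F ≤ (1/σr)·‖X − Û Σ̂ V̂ᵀ‖_F`. -/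
theorem stmt5 {n1 n2 r : ℕ} (hr1 : r ≤ n1) (hr2 : r ≤ n2)
    (U : Matrix (Fin n1) (Fin r) ℝ) (hU : Uᵀ * U = 1)
    (V : Matrix (Fin n2) (Fin r) ℝ) (hV : Vᵀ * V = 1)
    (Ut : Matrix (Fin n1) (Fin (n1 - r)) ℝ) (hUt : Utᵀ * Ut = 1) (hUperp : Uᵀ * Ut = 0)
    (Vt : Matrix (Fin n2) (Fin (n2 - r)) ℝ) (hVt : Vtᵀ * Vt = 1) (hVperp : Vᵀ * Vt = 0)
    (Q : Matrix (Fin r) (Fin r) ℝ) (σr : ℝ) (hσr : 0 < σr)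
    (hσr_min : IsLeast {t | ∃ v : Fin r → ℝ, l2norm v = 1 ∧ t = l2norm (Q *ᵥ v)} σr)
    (Uh : Matrix (Fin n1) (Fin r) ℝ) (hUh : Uhᵀ * Uh = 1)
    (Vh : Matrix (Fin n2) (Fin r) ℝ) (hVh : Vhᵀ * Vh = 1)
    (Sh : Matrix (Fin r) (Fin r) ℝ) :
    frobNorm (Utᵀ * Uh) ≤ (1 / σr) * frobNorm (U * Q * Vᵀ - Uh * Sh * Vhᵀ) ∧
    frobNorm (Vtᵀ * Vh) ≤ (1 / σr) * frobNorm (U * Q * Vᵀ - Uh * Sh * Vhᵀ) :=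
  stmt5_general U hU V hV Ut hUt hUperp Vt hVt hVperp Q σr hσr hσr_min Uh hUh Vh hVh Sh
end

section
/- Let Ω ⊆ R^{n1×n2} be a cone (i.e., closed under multiplication by nonnegative scalars), let X ∈ Ω, let Y ∈ R^{n1×n2}, and let X̂ ∈ Ω be a minimizer of ‖Z − Y‖_F over Z ∈ Ω. Define Δ = (Ω − Ω) ∩ B, where Ω − Ω = {Z1 − Z2 : Z1, Z2 ∈ Ω} and B is the Frobenius unit ball, and define ‖W‖_{Δ°} = sup_{Z ∈ Δ} ⟨W, Z⟩. Then ‖X̂ − X‖_F ≤ 2‖Y − X‖_{Δ°}. -/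
open Matrix

/-- The Frobenius (trace) inner product `⟨Y, X⟩ = trace(Yᵀ X)`. -/
def frobInner {n1 n2 : ℕ} (Y X : Matrix (Fin n1) (Fin n2) ℝ) : ℝ :=
  ∑ i, ∑ j, Y i j * X i j

lemma frobSum_nonneg {n1 n2 : ℕ} (M : Matrix (Fin n1) (Fin n2) ℝ) :
    0 ≤ ∑ i, ∑ j, (M i j) ^ 2 :=
  Finset.sum_nonneg fun _ _ => Finset.sum_nonneg fun _ _ => sq_nonneg _

lemma frobNorm_nonneg {n1 n2 : ℕ} (M : Matrix (Fin n1) (Fin n2) ℝ) : 0 ≤ frobNorm M :=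
  Real.sqrt_nonneg _

lemma frobNorm_sq {n1 n2 : ℕ} (M : Matrix (Fin n1) (Fin n2) ℝ) :
    frobNorm M ^ 2 = ∑ i, ∑ j, (M i j) ^ 2 :=
  Real.sq_sqrt (frobSum_nonneg M)

lemma frobNorm_smul {n1 n2 : ℕ} (c : ℝ) (M : Matrix (Fin n1) (Fin n2) ℝ) :
    frobNorm (c • M) = |c| * frobNorm M := by
  unfold frobNorm
  rw [show ∑ i, ∑ j, ((c • M) i j) ^ 2 = c ^ 2 * ∑ i, ∑ j, (M i j) ^ 2 by
    simp [Finset.mul_sum, Matrix.smul_apply, mul_pow, smul_eq_mul],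
    Real.sqrt_mul (sq_nonneg c), Real.sqrt_sq_eq_abs]

lemma frobInner_le {n1 n2 : ℕ} (A B : Matrix (Fin n1) (Fin n2) ℝ) :
    frobInner A B ≤ frobNorm A * frobNorm B := by
  have h := Real.sum_mul_le_sqrt_mul_sqrt (Finset.univ : Finset (Fin n1 × Fin n2))
    (fun p => A p.1 p.2) (fun p => B p.1 p.2)
  simpa [frobInner, frobNorm, Fintype.sum_prod_type] using h

/-- Lemma 6 of the paper: if `Ω` is a cone, `X ∈ Ω`, and `X̂` is a Frobenius-norm projection of
`Y` onto `Ω`, then `‖X̂ − X‖_F ≤ 2 ‖Y − X‖_{Δ°}`, where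
`Δ = (Ω − Ω) ∩ B` with `B` the Frobenius unit ball, and
`‖W‖_{Δ°} = sup_{Z ∈ Δ} ⟨W, Z⟩`. -/
theorem stmt8 {n1 n2 : ℕ} (S : Set (Matrix (Fin n1) (Fin n2) ℝ))
    (hcone : ∀ (c : ℝ), 0 ≤ c → ∀ Z ∈ S, c • Z ∈ S)
    (X : Matrix (Fin n1) (Fin n2) ℝ) (hX : X ∈ S)
    (Y : Matrix (Fin n1) (Fin n2) ℝ)
    (Xh : Matrix (Fin n1) (Fin n2) ℝ) (hXh : Xh ∈ S)
    (hmin : ∀ Z ∈ S, frobNorm (Xh - Y) ≤ frobNorm (Z - Y)) :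
    frobNorm (Xh - X) ≤
      2 * sSup {t | ∃ W, ((∃ Z1 ∈ S, ∃ Z2 ∈ S, W = Z1 - Z2) ∧ frobNorm W ≤ 1) ∧
        t = frobInner (Y - X) W} := by
  set T : Set ℝ := {t | ∃ W, ((∃ Z1 ∈ S, ∃ Z2 ∈ S, W = Z1 - Z2) ∧ frobNorm W ≤ 1) ∧
        t = frobInner (Y - X) W} with hT
  have hbdd : BddAbove T := by
    refine ⟨frobNorm (Y - X), fun t ht => ?_⟩
    obtain ⟨W, ⟨⟨_, hW1⟩, rfl⟩⟩ := ht
    calc frobInner (Y - X) W ≤ frobNorm (Y - X) * frobNorm W := frobInner_le _ _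
      _ ≤ frobNorm (Y - X) * 1 := mul_le_mul_of_nonneg_left hW1 (frobNorm_nonneg _)
      _ = frobNorm (Y - X) := mul_one _
  have h0 : (0 : ℝ) ∈ T := by
    refine ⟨X - X, ⟨⟨X, hX, X, hX, rfl⟩, ?_⟩, ?_⟩
    · simp [frobNorm]
    · simp [frobInner]
  have hsq : ∑ i, ∑ j, ((Xh - Y) i j) ^ 2 ≤ ∑ i, ∑ j, ((X - Y) i j) ^ 2 := by
    have h := hmin X hX
    calc ∑ i, ∑ j, ((Xh - Y) i j) ^ 2 = frobNorm (Xh - Y) ^ 2 := (frobNorm_sq _).symm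
      _ ≤ frobNorm (X - Y) ^ 2 := pow_le_pow_left₀ (frobNorm_nonneg _) h 2
      _ = _ := frobNorm_sq _
  have hident : (∑ i, ∑ j, ((Xh - X) i j) ^ 2) - 2 * frobInner (Y - X) (Xh - X)
      = (∑ i, ∑ j, ((Xh - Y) i j) ^ 2) - (∑ i, ∑ j, ((X - Y) i j) ^ 2) := by
    simp only [frobInner, Matrix.sub_apply, Finset.mul_sum, ← Finset.sum_sub_distrib]
    exact Finset.sum_congr rfl fun i _ => Finset.sum_congr rfl fun j _ => by ring
  have hkey : frobNorm (Xh - X) ^ 2 ≤ 2 * frobInner (Y - X) (Xh - X) := by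
    rw [frobNorm_sq]; linarith
  set r := frobNorm (Xh - X) with hr
  rcases eq_or_lt_of_le (frobNorm_nonneg (Xh - X)) with hzero | hpos
  · have := le_csSup hbdd h0
    rw [hr, ← hzero]; linarith
  · have hW : r⁻¹ • (Xh - X) = r⁻¹ • Xh - r⁻¹ • X := smul_sub _ _ _
    have hmem : r⁻¹ * frobInner (Y - X) (Xh - X) ∈ T := by
      refine ⟨r⁻¹ • (Xh - X), ⟨⟨r⁻¹ • Xh, hcone _ (by positivity) _ hXh,
        r⁻¹ • X, hcone _ (by positivity) _ hX, hW⟩, ?_⟩, ?_⟩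
      · rw [frobNorm_smul, abs_of_nonneg (by positivity), ← hr, inv_mul_cancel₀ hpos.ne']
      · simp only [frobInner, Matrix.smul_apply, smul_eq_mul, Finset.mul_sum]
        exact Finset.sum_congr rfl fun i _ => Finset.sum_congr rfl fun j _ => by ring
    have hle := le_csSup hbdd hmem
    have h2 : r * r ≤ 2 * frobInner (Y - X) (Xh - X) := by nlinarith [hkey]
    have hhalf : r / 2 ≤ r⁻¹ * frobInner (Y - X) (Xh - X) := by
      calc r / 2 = r⁻¹ * (r * r / 2) := by field_simp
        _ ≤ r⁻¹ * frobInner (Y - X) (Xh - X) := by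
            apply mul_le_mul_of_nonneg_left _ (by positivity)
            linarith
    linarith
end
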